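/- Let Ω and Θ be finite sets with |Ω| ≥ 3, |Θ| ≥ 2, and |Ω| ≥ |Θ|, and let φ : Δ(Ω×Θ) → Δ(Ω×Θ) satisfy positivity, continuity, weak signal coherence, and marginality. Then there exists ψ : Ω → ℝ₊₊ such that for all p ∈ Δ(Ω×Θ) and all (ω,θ) ∈ Ω×Θ, φ(p)(ω,θ) = ψ(ω)·p(ω,θ) / Σ_{ω',θ'} ψ(ω')·p(ω',θ'). -/

import Mathlib

open Finset

/-- `p` is a probability distribution on the finite set `α`. -/
def IsDist {α : Type*} [Fintype α] (p : α → ℝ) : Prop :=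
  (∀ a, 0 ≤ p a) ∧ ∑ a, p a = 1

/-- The conditional `p(·|θ)` of a joint distribution `p ∈ Δ(Ω×Θ)` given signal `θ`. -/
noncomputable def condSignal {Ω Θ : Type*} [Fintype Ω] [DecidableEq Θ]
    (p : Ω × Θ → ℝ) (θ : Θ) : Ω × Θ → ℝ :=
  fun x => if x.2 = θ then p x / ∑ ω, p (ω, θ) else 0

/-- `φ` is positive: `φ(p)(A) = 0` iff `p(A) = 0` for every event `A ⊆ Ω×Θ`. -/
def PositiveJoint {Ω Θ : Type*} [Fintype Ω] [Fintype Θ]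
    (φ : (Ω × Θ → ℝ) → Ω × Θ → ℝ) : Prop :=
  ∀ p, IsDist p → ∀ A : Finset (Ω × Θ), (∑ x ∈ A, φ p x = 0 ↔ ∑ x ∈ A, p x = 0)

/-- `φ` is weakly signal coherent: for every `θ` with `p(θ) > 0`,
`φ(p(·|θ)) = φ(p)(·|θ)`. -/
def WeakSignalCoherent {Ω Θ : Type*} [Fintype Ω] [Fintype Θ] [DecidableEq Θ]
    (φ : (Ω × Θ → ℝ) → Ω × Θ → ℝ) : Prop :=
  ∀ p, IsDist p → ∀ θ : Θ, 0 < ∑ ω, p (ω, θ) →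
    φ (condSignal p θ) = condSignal (φ p) θ

/-- `φ` satisfies marginality: distributions with equal `Ω`-marginals are mapped to
distributions with equal `Ω`-marginals. -/
def Marginality {Ω Θ : Type*} [Fintype Ω] [Fintype Θ]
    (φ : (Ω × Θ → ℝ) → Ω × Θ → ℝ) : Prop :=
  ∀ p p', IsDist p → IsDist p' →
    (∀ ω : Ω, ∑ θ, p (ω, θ) = ∑ θ, p' (ω, θ)) →
    ∀ ω : Ω, ∑ θ, φ p (ω, θ) = ∑ θ, φ p' (ω, θ)

/-! Restricting `φ` to distributions supported on a single signal gives a map `F` on `Δ(Ω)`.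
By coherence and marginality `F` does not depend on the signal, maps the `Ω`-marginal of `p`
to that of `φ p`, and on every slice `θ` of positive mass, `φ p (·, θ)` is a multiple of
`F (p(·|θ))`. Realising `u + v` as the marginal of a distribution with two signal slices `u`, `v`
shows that `F` maps mixtures to mixtures. Hence the ratio `F q b / F q a` is a function
`R_ab (q b / q a)`, and comparing a mixture of the edges `{a, c}` and `{b, c}` with a third state
shows that `R_ac` is additive, hence linear; so `F q ∝ ψ q` with `ψ = F (uniform)`.
Then `φ p (·, θ) = c_θ ψ p (·, θ)` on each slice, and comparing marginals forces
`c_θ = 1 / ∑ ψ p` as soon as the slices of `p` are linearly independent. As `|Θ| ≤ |Ω|`, such `p`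
are dense in `Δ(Ω × Θ)`, and continuity of `φ` concludes. -/

open Filter Topology

lemma eq_mul_of_add_of_pos {G : ℝ → ℝ} (hpos : ∀ s, 0 < s → 0 < G s)
    (hadd : ∀ s t, 0 < s → 0 < t → G (s + t) = G s + G t) {s : ℝ} (hs : 0 < s) :
    G s = G 1 * s := by
  have hG1 := hpos 1 one_pos
  have hmono : StrictMonoOn G (Set.Ioi 0) := fun a ha b _ hab => by
    have h := hadd a (b - a) ha (sub_pos.2 hab)
    rw [add_sub_cancel] at h
    linarith [hpos (b - a) (sub_pos.2 hab)]
  have hnat : ∀ n : ℕ, 0 < n → ∀ x, 0 < x → G (n * x) = n * G x := by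
    intro n hn x hx
    induction n, hn using Nat.le_induction with
    | base => simp
    | succ n hn ih =>
      push_cast
      rw [add_mul, one_mul, hadd _ _ (by positivity) hx, ih]
      ring
  have hrat : ∀ q : ℚ, 0 < q → G q = G 1 * q := by
    intro q hq
    -- `den * G q = G num = num * G 1`
    have hnum : (q : ℝ) * q.den = q.num.toNat := by
      rw [show ((q.num.toNat : ℕ) : ℝ) = q.num by
        exact_mod_cast Int.toNat_of_nonneg (Rat.num_pos.2 hq).le]
      exact_mod_cast Rat.mul_den_eq_num q
    have h := hnat q.den q.pos q (by exact_mod_cast hq)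
    rw [mul_comm, hnum, ← mul_one ((q.num.toNat : ℕ) : ℝ),
      hnat _ (by have := Rat.num_pos.2 hq; omega) 1 one_pos, ← hnum] at h
    have hden : (0 : ℝ) < q.den := by exact_mod_cast q.pos
    nlinarith
  rw [mul_comm, ← div_eq_iff hG1.ne']
  apply le_antisymm
  · refine le_of_forall_lt_rat_imp_le fun q hq => ?_
    have hq0 : (0 : ℝ) < q := hs.trans hq
    rw [div_le_iff₀ hG1, mul_comm, ← hrat q (by exact_mod_cast hq0)]
    exact (hmono hs hq0 hq).le
  · refine le_of_forall_lt_rat_imp_le fun q hq => ?_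
    have hq0 : (0 : ℝ) < q := (div_pos (hpos s hs) hG1).trans hq
    rw [div_lt_iff₀ hG1, mul_comm, ← hrat q (by exact_mod_cast hq0)] at hq
    exact ((hmono.lt_iff_lt hs hq0).1 hq).le

lemma exists_ne_ne_of_three_le_card {α : Type*} [Fintype α] [DecidableEq α]
    (h : 3 ≤ Fintype.card α) (a b : α) : ∃ c, c ≠ a ∧ c ≠ b := by
  obtain ⟨c, -, hc⟩ := Finset.exists_mem_notMem_of_card_lt_card (s := {a, b}) (t := univ)
    (Finset.card_le_two.trans_lt (by rwa [card_univ]))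
  simp only [mem_insert, mem_singleton, not_or] at hc
  exact ⟨c, hc⟩

lemma Matrix.eventually_det_add_smul_one_ne_zero {n K : Type*} [Fintype n] [DecidableEq n]
    [Field K] [TopologicalSpace K] [T1Space K] (A : Matrix n n K) :
    ∀ᶠ t in 𝓝[≠] (0 : K), (A + t • 1).det ≠ 0 := by
  filter_upwards [nhdsNE_le_cofinite (0 : K)
    (Polynomial.finite_setOfPred_isRoot (Matrix.charpoly_monic (-A)).ne_zero).compl_mem_cofinite]
    with t ht
  rw [Set.mem_compl_iff, Set.mem_ofPred_eq, Polynomial.IsRoot, Matrix.eval_charpoly] at ht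
  rwa [sub_neg_eq_add, add_comm, Matrix.scalar_apply, ← Matrix.smul_one_eq_diagonal] at ht

lemma LinearIndependent.of_det_comp_ne_zero {ι κ K : Type*} [Fintype ι] [DecidableEq ι] [Field K]
    {v : ι → κ → K} (e : ι → κ) (h : (Matrix.of fun i j => v i (e j)).det ≠ 0) :
    LinearIndependent K v :=
  LinearIndependent.of_comp (LinearMap.funLeft K K e)
    (Matrix.linearIndependent_rows_of_det_ne_zero h)

section Weights

variable {α : Type*} [Fintype α]

/-- `v` rescaled to total mass one (the zero vector if `∑ v = 0`). -/
noncomputable def normalized (v : α → ℝ) : α → ℝ := fun a => v a / ∑ b, v b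

lemma isDist_normalized {v : α → ℝ} (hv : 0 ≤ v) (hsum : 0 < ∑ a, v a) :
    IsDist (normalized v) :=
  ⟨fun a => div_nonneg (hv a) hsum.le, by
    simp only [normalized, ← Finset.sum_div, div_self hsum.ne']⟩

lemma normalized_of_isDist {q : α → ℝ} (hq : IsDist q) : normalized q = q := by
  funext a
  simp only [normalized, hq.2, div_one]

lemma normalized_smul {c : ℝ} (hc : c ≠ 0) (v : α → ℝ) : normalized (c • v) = normalized v := by
  funext a
  simp only [normalized, Pi.smul_apply, smul_eq_mul, ← Finset.mul_sum]
  exact mul_div_mul_left _ _ hc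

lemma normalized_eq_inv_smul (v : α → ℝ) :
    normalized v = (∑ a, v a)⁻¹ • v := by
  funext a
  simp [normalized, div_eq_inv_mul]

lemma normalized_mul_normalized {v : α → ℝ} (hv : ∑ a, v a ≠ 0)
    (ψ : α → ℝ) : normalized (ψ * normalized v) = normalized (ψ * v) := by
  rw [normalized_eq_inv_smul v, mul_smul_comm, normalized_smul (inv_ne_zero hv)]

lemma continuousAt_normalized {v : α → ℝ} (hsum : ∑ a, v a ≠ 0) : ContinuousAt normalized v :=
  continuousAt_pi.2 fun a => (continuous_apply a).continuousAt.div
    (continuous_finsetSum _ fun b _ => continuous_apply b).continuousAt hsum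

lemma IsDist.exists_pos {q : α → ℝ} (hq : IsDist q) : ∃ a, 0 < q a := by
  by_contra! h
  have : ∑ a, q a = 0 := Finset.sum_eq_zero fun a _ => le_antisymm (h a) (hq.1 a)
  linarith [hq.2]

lemma IsDist.sum_mul_pos {q : α → ℝ} (hq : IsDist q) {ψ : α → ℝ} (hψ : ∀ a, 0 < ψ a) :
    0 < ∑ a, ψ a * q a := by
  obtain ⟨a, ha⟩ := hq.exists_pos
  exact Finset.sum_pos' (fun b _ => mul_nonneg (hψ b).le (hq.1 b))
    ⟨a, Finset.mem_univ a, mul_pos (hψ a) ha⟩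

lemma continuousOn_normalized_mul {ψ : α → ℝ} (hψ : ∀ a, 0 < ψ a) :
    ContinuousOn (fun p : α → ℝ => normalized (ψ * p)) {p | IsDist p} := fun _ hp =>
  ((continuousAt_normalized (hp.sum_mul_pos hψ).ne').comp
    (continuous_const.mul continuous_id).continuousAt).continuousWithinAt

end Weights

section Marginal

variable {Ω Θ : Type*} [Fintype Θ]

def marginal (p : Ω × Θ → ℝ) : Ω → ℝ := fun ω => ∑ θ, p (ω, θ)

lemma marginal_add (p p' : Ω × Θ → ℝ) : marginal (p + p') = marginal p + marginal p' := by
  funext ω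
  exact Finset.sum_add_distrib

variable [Fintype Ω]

lemma sum_marginal (p : Ω × Θ → ℝ) : ∑ ω, marginal p ω = ∑ x, p x :=
  (Fintype.sum_prod_type p).symm

lemma isDist_marginal {p : Ω × Θ → ℝ} (hp : IsDist p) : IsDist (marginal p) :=
  ⟨fun ω => Finset.sum_nonneg fun θ _ => hp.1 (ω, θ), by rw [sum_marginal, hp.2]⟩

lemma marginal_normalized (p : Ω × Θ → ℝ) : marginal (normalized p) = normalized (marginal p) := by
  funext ω
  simp only [marginal, normalized, ← Finset.sum_div, ← sum_marginal]

lemma normalized_slice_normalized {J : Ω × Θ → ℝ} (hJ : ∑ x, J x ≠ 0) (θ : Θ) :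
    (normalized fun ω => normalized J (ω, θ)) = normalized fun ω => J (ω, θ) := by
  have : (fun ω => normalized J (ω, θ)) = (∑ x, J x)⁻¹ • fun ω => J (ω, θ) := by
    rw [normalized_eq_inv_smul]
    rfl
  rw [this, normalized_smul (inv_ne_zero hJ)]

end Marginal

section AtSignal

variable {Ω Θ : Type*} [DecidableEq Θ]

def atSignal (θ : Θ) (q : Ω → ℝ) : Ω × Θ → ℝ := fun x => if x.2 = θ then q x.1 else 0

@[simp] lemma atSignal_apply (θ θ' : Θ) (q : Ω → ℝ) (ω : Ω) :
    atSignal θ q (ω, θ') = if θ' = θ then q ω else 0 := rfl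

lemma atSignal_nonneg {q : Ω → ℝ} (hq : 0 ≤ q) (θ : Θ) : 0 ≤ atSignal θ q := fun x => by
  unfold atSignal
  split_ifs
  exacts [hq x.1, le_rfl]

@[simp] lemma marginal_atSignal [Fintype Θ] (θ : Θ) (q : Ω → ℝ) : marginal (atSignal θ q) = q := by
  funext ω
  simp [marginal]

variable [Fintype Ω]

lemma isDist_atSignal [Fintype Θ] {q : Ω → ℝ} (hq : IsDist q) (θ : Θ) : IsDist (atSignal θ q) :=
  ⟨atSignal_nonneg hq.1 θ, by rw [← sum_marginal, marginal_atSignal, hq.2]⟩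

lemma condSignal_eq_atSignal (p : Ω × Θ → ℝ) (θ : Θ) :
    condSignal p θ = atSignal θ (normalized fun ω => p (ω, θ)) := by
  funext ⟨ω, θ'⟩
  by_cases h : θ' = θ
  · subst h; simp [condSignal, normalized]
  · simp [condSignal, h]

lemma condSignal_atSignal {q : Ω → ℝ} (hq : IsDist q) (θ : Θ) :
    condSignal (atSignal θ q) θ = atSignal θ q := by
  rw [condSignal_eq_atSignal]
  simpa using congrArg (atSignal θ) (normalized_of_isDist hq)

end AtSignal

section Admissible

variable {Ω Θ : Type*} [Fintype Ω] [Fintype Θ] [DecidableEq Θ]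

structure IsAdmissible (φ : (Ω × Θ → ℝ) → Ω × Θ → ℝ) : Prop where
  isDist_apply : ∀ p, IsDist p → IsDist (φ p)
  positive : PositiveJoint φ
  coherent : WeakSignalCoherent φ
  marginality : Marginality φ

/-- The map `F` of the sketch above, read through the signal `θ`. -/
def induced (φ : (Ω × Θ → ℝ) → Ω × Θ → ℝ) (θ : Θ) (q : Ω → ℝ) : Ω → ℝ :=
  fun ω => φ (atSignal θ q) (ω, θ)

namespace IsAdmissible

variable {φ : (Ω × Θ → ℝ) → Ω × Θ → ℝ} (hφ : IsAdmissible φ)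
include hφ

lemma apply_eq_zero_iff {p : Ω × Θ → ℝ} (hp : IsDist p) (x : Ω × Θ) :
    φ p x = 0 ↔ p x = 0 := by
  simpa using hφ.positive p hp {x}

lemma apply_pos {p : Ω × Θ → ℝ} (hp : IsDist p) {x : Ω × Θ} (hx : 0 < p x) : 0 < φ p x :=
  ((hφ.isDist_apply p hp).1 x).lt_of_ne' fun h => hx.ne' ((hφ.apply_eq_zero_iff hp x).1 h)

lemma sum_slice_apply_eq_zero_iff {p : Ω × Θ → ℝ} (hp : IsDist p) (θ : Θ) :
    ∑ ω, φ p (ω, θ) = 0 ↔ ∑ ω, p (ω, θ) = 0 := by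
  simpa [Finset.sum_product] using hφ.positive p hp (univ ×ˢ {θ})

lemma sum_slice_apply_pos {p : Ω × Θ → ℝ} (hp : IsDist p) {θ : Θ} (h : 0 < ∑ ω, p (ω, θ)) :
    0 < ∑ ω, φ p (ω, θ) :=
  (Finset.sum_nonneg fun ω _ => (hφ.isDist_apply p hp).1 (ω, θ)).lt_of_ne'
    fun h0 => h.ne' ((hφ.sum_slice_apply_eq_zero_iff hp θ).1 h0)

lemma apply_atSignal {q : Ω → ℝ} (hq : IsDist q) (θ : Θ) :
    φ (atSignal θ q) = atSignal θ (induced φ θ q) := by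
  have h := hφ.coherent _ (isDist_atSignal hq θ) θ (by simp [hq.2])
  rw [condSignal_atSignal hq, condSignal_eq_atSignal] at h
  rw [h]
  congr 1
  funext ω
  simpa [induced] using (congrFun h (ω, θ)).symm

lemma isDist_induced {q : Ω → ℝ} (hq : IsDist q) (θ : Θ) : IsDist (induced φ θ q) := by
  have h := hφ.isDist_apply _ (isDist_atSignal hq θ)
  rw [hφ.apply_atSignal hq θ] at h
  exact ⟨fun ω => by simpa using h.1 (ω, θ), by rw [← h.2, ← sum_marginal, marginal_atSignal]⟩

lemma induced_eq_zero_iff {q : Ω → ℝ} (hq : IsDist q) (θ : Θ) (ω : Ω) :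
    induced φ θ q ω = 0 ↔ q ω = 0 := by
  simpa [induced] using hφ.apply_eq_zero_iff (isDist_atSignal hq θ) (ω, θ)

lemma induced_pos {q : Ω → ℝ} (hq : IsDist q) (θ : Θ) {ω : Ω} (hω : 0 < q ω) :
    0 < induced φ θ q ω := by
  simpa [induced] using hφ.apply_pos (isDist_atSignal hq θ) (x := (ω, θ)) (by simpa using hω)

lemma marginal_apply {p : Ω × Θ → ℝ} (hp : IsDist p) (θ : Θ) :
    marginal (φ p) = induced φ θ (marginal p) := by
  funext ω
  have h := hφ.marginality p _ hp (isDist_atSignal (isDist_marginal hp) θ)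
    (fun ω => congrFun (marginal_atSignal θ (marginal p)).symm ω) ω
  change marginal (φ p) ω = marginal (φ (atSignal θ (marginal p))) ω at h
  rw [h, hφ.apply_atSignal (isDist_marginal hp), marginal_atSignal]

lemma induced_congr {q : Ω → ℝ} (hq : IsDist q) (θ θ' : Θ) : induced φ θ' q = induced φ θ q := by
  have h := hφ.marginal_apply (isDist_atSignal hq θ) θ'
  rwa [hφ.apply_atSignal hq, marginal_atSignal, marginal_atSignal, eq_comm] at h

lemma apply_eq_mul_induced {p : Ω × Θ → ℝ} (hp : IsDist p) (θ₀ θ : Θ) (ω : Ω) :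
    φ p (ω, θ) = (∑ ω', φ p (ω', θ)) * induced φ θ₀ (normalized fun ω' => p (ω', θ)) ω := by
  rcases (Finset.sum_nonneg fun ω _ => hp.1 (ω, θ)).eq_or_lt' with h0 | hpos
  · have hW := (hφ.sum_slice_apply_eq_zero_iff hp θ).2 h0
    rw [hW, zero_mul]
    exact (Finset.sum_eq_zero_iff_of_nonneg fun ω' _ => (hφ.isDist_apply p hp).1 _).1 hW ω
      (mem_univ ω)
  · have hq := isDist_normalized (fun ω => hp.1 (ω, θ)) hpos
    have hc := congrFun (hφ.coherent p hp θ hpos) (ω, θ)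
    rw [condSignal_eq_atSignal, hφ.apply_atSignal hq θ, condSignal_eq_atSignal] at hc
    simp only [atSignal_apply, if_true] at hc
    rw [hφ.induced_congr hq θ θ₀, hc, normalized,
      mul_div_cancel₀ _ (hφ.sum_slice_apply_pos hp hpos).ne']

lemma induced_normalized_pos (θ : Θ) {v : Ω → ℝ} (hv : 0 ≤ v) {ω : Ω} (hω : 0 < v ω) :
    0 < induced φ θ (normalized v) ω := by
  have hsum : 0 < ∑ a, v a := Finset.sum_pos' (fun a _ => hv a) ⟨ω, mem_univ ω, hω⟩
  exact hφ.induced_pos (isDist_normalized hv hsum) θ (div_pos hω hsum)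

lemma induced_normalized_eq_zero (θ : Θ) {v : Ω → ℝ} (hv : 0 ≤ v) (hsum : 0 < ∑ a, v a)
    {ω : Ω} (hω : v ω = 0) : induced φ θ (normalized v) ω = 0 :=
  (hφ.induced_eq_zero_iff (isDist_normalized hv hsum) θ ω).2 (by simp [normalized, hω])

lemma exists_induced_normalized_add [Nontrivial Θ] (θ₀ : Θ) {u v : Ω → ℝ} (hu : 0 ≤ u)
    (hv : 0 ≤ v) (hu' : 0 < ∑ ω, u ω) (hv' : 0 < ∑ ω, v ω) :
    ∃ w, 0 < w ∧ w < 1 ∧ ∀ ω, induced φ θ₀ (normalized (u + v)) ω =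
      w * induced φ θ₀ (normalized u) ω + (1 - w) * induced φ θ₀ (normalized v) ω := by
  obtain ⟨θ₁, h10⟩ := exists_ne θ₀
  have huv : 0 < ∑ ω, (u + v) ω := by
    rw [Pi.add_def, Finset.sum_add_distrib]
    exact add_pos hu' hv'
  -- `u + v` is the `Ω`-marginal of the joint distribution with `θ₀`-slice `u` and `θ₁`-slice `v`.
  set J := atSignal θ₀ u + atSignal θ₁ v
  have hmarg : marginal J = u + v := by rw [marginal_add, marginal_atSignal, marginal_atSignal]
  have hsum : 0 < ∑ x, J x := by rwa [← sum_marginal, hmarg]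
  have hp : IsDist (normalized J) :=
    isDist_normalized (add_nonneg (atSignal_nonneg hu θ₀) (atSignal_nonneg hv θ₁)) hsum
  have hslice₀ : (fun ω => J (ω, θ₀)) = u := by funext ω; simp [J, h10.symm]
  have hslice₁ : (fun ω => J (ω, θ₁)) = v := by funext ω; simp [J, h10]
  set W₀ := ∑ ω, φ (normalized J) (ω, θ₀)
  set W₁ := ∑ ω, φ (normalized J) (ω, θ₁)
  have key : ∀ ω, induced φ θ₀ (normalized (u + v)) ω =
      W₀ * induced φ θ₀ (normalized u) ω + W₁ * induced φ θ₀ (normalized v) ω := by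
    intro ω
    rw [← hmarg, ← marginal_normalized, ← hφ.marginal_apply hp θ₀, marginal,
      Fintype.sum_eq_add θ₀ θ₁ h10.symm, hφ.apply_eq_mul_induced hp θ₀ θ₀,
      hφ.apply_eq_mul_induced hp θ₀ θ₁, normalized_slice_normalized hsum.ne',
      normalized_slice_normalized hsum.ne', hslice₀, hslice₁]
    rintro θ ⟨h0, h1⟩
    exact (hφ.apply_eq_zero_iff hp _).2 (by simp [J, normalized, h0, h1])
  have hW₀ : 0 < W₀ := hφ.sum_slice_apply_pos hp (by
    simpa [normalized, ← Finset.sum_div, hslice₀] using div_pos hu' hsum)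
  have hW₁ : 0 < W₁ := hφ.sum_slice_apply_pos hp (by
    simpa [normalized, ← Finset.sum_div, hslice₁] using div_pos hv' hsum)
  have hW : W₀ + W₁ = 1 := by
    have := Finset.sum_congr rfl fun ω (_ : ω ∈ univ) => key ω
    simpa [Finset.sum_add_distrib, ← Finset.mul_sum,
      (hφ.isDist_induced (isDist_normalized (add_nonneg hu hv) huv) θ₀).2,
      (hφ.isDist_induced (isDist_normalized hu hu') θ₀).2,
      (hφ.isDist_induced (isDist_normalized hv hv') θ₀).2] using this.symm
  exact ⟨W₀, hW₀, by linarith, fun ω => by rw [key ω, ← hW]; ring⟩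

end IsAdmissible

end Admissible

section EdgeRatio

variable {Ω Θ : Type*} [Fintype Ω] [DecidableEq Ω] [Fintype Θ] [DecidableEq Θ]
  {φ : (Ω × Θ → ℝ) → Ω × Θ → ℝ}

/-- `R_ab s` of the sketch above: `F e b / F e a` for the distribution `e` on `{a, b}` with
`e b / e a = s`. -/
noncomputable def edgeRatio (φ : (Ω × Θ → ℝ) → Ω × Θ → ℝ) (θ : Θ) (a b : Ω) (s : ℝ) : ℝ :=
  induced φ θ (normalized (Pi.single a 1 + Pi.single b s)) b /
    induced φ θ (normalized (Pi.single a 1 + Pi.single b s)) a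

namespace IsAdmissible

variable (hφ : IsAdmissible φ)
include hφ

lemma edgeRatio_pos (θ : Θ) {a b : Ω} (hab : a ≠ b) {s : ℝ} (hs : 0 < s) :
    0 < edgeRatio φ θ a b s := by
  have hv : 0 ≤ (Pi.single a 1 + Pi.single b s : Ω → ℝ) :=
    add_nonneg (Pi.single_nonneg.2 zero_le_one) (Pi.single_nonneg.2 hs.le)
  exact div_pos (hφ.induced_normalized_pos θ hv (by simp [hab.symm, hs]))
    (hφ.induced_normalized_pos θ hv (by simp [hab]))

lemma induced_div_eq_edgeRatio [Nontrivial Θ] (θ₀ : Θ) {v : Ω → ℝ} (hv : 0 ≤ v) {a b : Ω}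
    (hab : a ≠ b) (ha : 0 < v a) (hb : 0 < v b) :
    induced φ θ₀ (normalized v) b / induced φ θ₀ (normalized v) a =
      edgeRatio φ θ₀ a b (v b / v a) := by
  -- Split `v` into its part `u` on `{a, b}` and the rest `r`, which `F` sends to zero at `a`, `b`.
  set u : Ω → ℝ := Pi.single a (v a) + Pi.single b (v b)
  set r := v - u
  have hvur : v = u + r := (add_sub_cancel u v).symm
  have hu : 0 ≤ u := add_nonneg (Pi.single_nonneg.2 ha.le) (Pi.single_nonneg.2 hb.le)
  have hr : 0 ≤ r := fun ω => by
    rcases eq_or_ne ω a with rfl | h₁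
    · simp [r, u, hab]
    rcases eq_or_ne ω b with rfl | h₂
    · simp [r, u, hab.symm]
    simpa [r, u, h₁, h₂] using hv ω
  have hra : r a = 0 := by simp [r, u, hab]
  have hrb : r b = 0 := by simp [r, u, hab.symm]
  have hu' : u = v a • (Pi.single a 1 + Pi.single b (v b / v a)) := by
    funext ω
    rcases eq_or_ne ω a with rfl | h₁
    · simp [u, hab]
    rcases eq_or_ne ω b with rfl | h₂
    · simp [u, hab.symm]
      field_simp
    simp [u, h₁, h₂]
  suffices induced φ θ₀ (normalized v) b / induced φ θ₀ (normalized v) a =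
      induced φ θ₀ (normalized u) b / induced φ θ₀ (normalized u) a by
    rw [this, hu', normalized_smul ha.ne']
    rfl
  rcases (Finset.sum_nonneg fun ω _ => hr ω).eq_or_lt' with h0 | hpos
  · have : r = 0 := funext fun ω => (Finset.sum_eq_zero_iff_of_nonneg fun ω _ => hr ω).1 h0 ω
      (mem_univ ω)
    rw [hvur, this, add_zero]
  · have hu'' : 0 < ∑ ω, u ω :=
      Finset.sum_pos' (fun ω _ => hu ω) ⟨a, mem_univ a, by simp [u, hab, ha]⟩
    obtain ⟨w, hw, -, hmix⟩ := hφ.exists_induced_normalized_add θ₀ hu hr hu'' hpos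
    rw [hvur, hmix a, hmix b, hφ.induced_normalized_eq_zero θ₀ hr hpos hra,
      hφ.induced_normalized_eq_zero θ₀ hr hpos hrb]
    simp only [mul_zero, add_zero]
    exact mul_div_mul_left _ _ hw.ne'

lemma edgeRatio_mul [Nontrivial Θ] (θ₀ : Θ) {a b c : Ω} (hab : a ≠ b) (hbc : b ≠ c) (hac : a ≠ c)
    {s t : ℝ} (hs : 0 < s) (ht : 0 < t) :
    edgeRatio φ θ₀ a c (s * t) = edgeRatio φ θ₀ a b s * edgeRatio φ θ₀ b c t := by
  set v : Ω → ℝ := Pi.single a 1 + Pi.single b s + Pi.single c (s * t)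
  have hv : 0 ≤ v := add_nonneg (add_nonneg (Pi.single_nonneg.2 zero_le_one)
    (Pi.single_nonneg.2 hs.le)) (Pi.single_nonneg.2 (mul_pos hs ht).le)
  have hva : v a = 1 := by simp [v, hab, hac]
  have hvb : v b = s := by simp [v, hab.symm, hbc]
  have hvc : v c = s * t := by simp [v, hac.symm, hbc.symm]
  have hpos : ∀ ω, 0 < v ω → 0 < induced φ θ₀ (normalized v) ω :=
    fun ω => hφ.induced_normalized_pos θ₀ hv
  have hac' := hφ.induced_div_eq_edgeRatio θ₀ hv hac (by rw [hva]; exact one_pos)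
    (by rw [hvc]; positivity)
  have hab' := hφ.induced_div_eq_edgeRatio θ₀ hv hab (by rw [hva]; exact one_pos)
    (by rw [hvb]; exact hs)
  have hbc' := hφ.induced_div_eq_edgeRatio θ₀ hv hbc (by rw [hvb]; exact hs)
    (by rw [hvc]; positivity)
  rw [hva, hvc, div_one] at hac'
  rw [hva, hvb, div_one] at hab'
  rw [hvb, hvc, mul_div_cancel_left₀ t hs.ne'] at hbc'
  rw [← hac', ← hab', ← hbc', mul_comm, div_mul_div_cancel₀ (hpos b (by rw [hvb]; exact hs)).ne']

lemma edgeRatio_add [Nontrivial Θ] (θ₀ : Θ) {a b c : Ω} (hab : a ≠ b) (hbc : b ≠ c)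
    (hac : a ≠ c) {s t : ℝ} (hs : 0 < s) (ht : 0 < t) :
    edgeRatio φ θ₀ a c (s + t) = edgeRatio φ θ₀ a c s + edgeRatio φ θ₀ a c t := by
  -- Mixing the edges `{a, c}` and `{b, c}` gives ratios `c : a = s + t` and `b : a = t`.
  set u : Ω → ℝ := Pi.single a 1 + Pi.single c s
  set r : Ω → ℝ := Pi.single b t + Pi.single c t
  have hu : 0 ≤ u := add_nonneg (Pi.single_nonneg.2 zero_le_one) (Pi.single_nonneg.2 hs.le)
  have hr : 0 ≤ r := add_nonneg (Pi.single_nonneg.2 ht.le) (Pi.single_nonneg.2 ht.le)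
  have hua : u a = 1 := by simp [u, hac]
  have hub : u b = 0 := by simp [u, hab.symm, hbc]
  have huc : u c = s := by simp [u, hac.symm]
  have hra : r a = 0 := by simp [r, hab, hac]
  have hrb : r b = t := by simp [r, hbc]
  have hrc : r c = t := by simp [r, hbc.symm]
  have hu' : 0 < ∑ ω, u ω := by
    simp only [u, Pi.add_apply, Finset.sum_add_distrib, Finset.sum_pi_single', mem_univ, if_true]
    linarith
  have hr' : 0 < ∑ ω, r ω := by
    simp only [r, Pi.add_apply, Finset.sum_add_distrib, Finset.sum_pi_single', mem_univ, if_true]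
    linarith
  obtain ⟨w, hw, -, hmix⟩ := hφ.exists_induced_normalized_add θ₀ hu hr hu' hr'
  have hst := hφ.induced_div_eq_edgeRatio θ₀ (add_nonneg hu hr) hac
    (by simp [hua, hra]) (by simp [huc, hrc]; linarith)
  have hab' := hφ.induced_div_eq_edgeRatio θ₀ (add_nonneg hu hr) hab
    (by simp [hua, hra]) (by simp [hub, hrb, ht])
  have hbc' := hφ.induced_div_eq_edgeRatio θ₀ hr hbc (by rw [hrb]; exact ht) (by rw [hrc]; exact ht)
  simp only [Pi.add_apply, hua, hub, huc, hra, hrb, hrc, add_zero, zero_add, div_one,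
    div_self ht.ne'] at hst hab' hbc'
  have hmul : edgeRatio φ θ₀ a c t = edgeRatio φ θ₀ a b t * edgeRatio φ θ₀ b c 1 := by
    simpa using hφ.edgeRatio_mul θ₀ hab hbc hac ht one_pos
  have hFua : 0 < induced φ θ₀ (normalized u) a :=
    hφ.induced_normalized_pos θ₀ hu (by rw [hua]; exact one_pos)
  have hFrb : 0 < induced φ θ₀ (normalized r) b :=
    hφ.induced_normalized_pos θ₀ hr (by rw [hrb]; exact ht)
  have hFub : induced φ θ₀ (normalized u) b = 0 := hφ.induced_normalized_eq_zero θ₀ hu hu' hub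
  have hFra : induced φ θ₀ (normalized r) a = 0 := hφ.induced_normalized_eq_zero θ₀ hr hr' hra
  rw [hmul, ← hst, ← hab', ← hbc', hmix a, hmix b, hmix c, hFub, hFra,
    show edgeRatio φ θ₀ a c s = induced φ θ₀ (normalized u) c / induced φ θ₀ (normalized u) a
      from rfl]
  field_simp
  ring

lemma edgeRatio_eq_mul [Nontrivial Θ] (θ₀ : Θ) (hΩ : 3 ≤ Fintype.card Ω) {a c : Ω} (hac : a ≠ c)
    {s : ℝ} (hs : 0 < s) : edgeRatio φ θ₀ a c s = edgeRatio φ θ₀ a c 1 * s := by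
  obtain ⟨b, hba, hbc⟩ := exists_ne_ne_of_three_le_card hΩ a c
  exact eq_mul_of_add_of_pos (fun s hs => hφ.edgeRatio_pos θ₀ hac hs)
    (fun s t hs ht => hφ.edgeRatio_add θ₀ hba.symm hbc hac hs ht) hs

lemma induced_mul_eq_mul [Nontrivial Θ] (θ₀ : Θ) (hΩ : 3 ≤ Fintype.card Ω) {q : Ω → ℝ}
    (hq : IsDist q) (i j : Ω) :
    induced φ θ₀ q j * (induced φ θ₀ (normalized 1) i * q i) =
      induced φ θ₀ q i * (induced φ θ₀ (normalized 1) j * q j) := by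
  rcases eq_or_ne i j with rfl | hij
  · ring
  rcases (hq.1 i).eq_or_lt' with hi | hi
  · rw [hi, (hφ.induced_eq_zero_iff hq θ₀ i).2 hi]
    ring
  rcases (hq.1 j).eq_or_lt' with hj | hj
  · rw [hj, (hφ.induced_eq_zero_iff hq θ₀ j).2 hj]
    ring
  have h1 : (0 : Ω → ℝ) ≤ 1 := zero_le_one
  have hq' := hφ.induced_div_eq_edgeRatio θ₀ hq.1 hij hi hj
  have hψ := hφ.induced_div_eq_edgeRatio θ₀ h1 hij one_pos one_pos
  rw [normalized_of_isDist hq, hφ.edgeRatio_eq_mul θ₀ hΩ hij (div_pos hj hi)] at hq'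
  simp only [Pi.one_apply, div_one] at hψ
  have hFi := hφ.induced_pos hq θ₀ hi
  have hψi := hφ.induced_normalized_pos θ₀ h1 (ω := i) one_pos
  rw [← hψ, div_mul_div_comm, div_eq_div_iff hFi.ne' (mul_pos hψi hi).ne'] at hq'
  linear_combination hq'

lemma exists_induced_eq_normalized [Nontrivial Θ] (θ₀ : Θ) (hΩ : 3 ≤ Fintype.card Ω) :
    ∃ ψ : Ω → ℝ, (∀ ω, 0 < ψ ω) ∧ ∀ q, IsDist q → induced φ θ₀ q = normalized (ψ * q) := by
  refine ⟨induced φ θ₀ (normalized 1), fun ω => hφ.induced_normalized_pos θ₀ zero_le_one one_pos,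
    fun q hq => funext fun i => ?_⟩
  have hZ := hq.sum_mul_pos fun ω => hφ.induced_normalized_pos θ₀ zero_le_one (ω := ω) one_pos
  simp only [normalized, Pi.mul_apply]
  rw [eq_div_iff hZ.ne', Finset.mul_sum]
  calc ∑ j, induced φ θ₀ q i * (induced φ θ₀ (normalized 1) j * q j)
      = ∑ j, induced φ θ₀ q j * (induced φ θ₀ (normalized 1) i * q i) :=
        Finset.sum_congr rfl fun j _ => (hφ.induced_mul_eq_mul θ₀ hΩ hq i j).symm
    _ = induced φ θ₀ (normalized 1) i * q i := by
        rw [← Finset.sum_mul, (hφ.isDist_induced hq θ₀).2, one_mul]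

end IsAdmissible

end EdgeRatio

section LinearIndependent

variable {Ω Θ : Type*} [Fintype Ω] [Fintype Θ] [DecidableEq Θ]
  {φ : (Ω × Θ → ℝ) → Ω × Θ → ℝ}

namespace IsAdmissible

variable (hφ : IsAdmissible φ)
include hφ

lemma exists_apply_slice_eq_mul {θ₀ : Θ} {ψ : Ω → ℝ}
    (hF : ∀ q, IsDist q → induced φ θ₀ q = normalized (ψ * q)) {p : Ω × Θ → ℝ} (hp : IsDist p)
    (θ : Θ) : ∃ c, ∀ ω, φ p (ω, θ) = c * (ψ ω * p (ω, θ)) := by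
  rcases (Finset.sum_nonneg fun ω _ => hp.1 (ω, θ)).eq_or_lt' with h0 | hpos
  · refine ⟨0, fun ω => ?_⟩
    have := (Finset.sum_eq_zero_iff_of_nonneg fun ω _ => hp.1 (ω, θ)).1 h0 ω (mem_univ ω)
    rw [zero_mul, (hφ.apply_eq_zero_iff hp _).2 this]
  · refine ⟨(∑ ω', φ p (ω', θ)) / ∑ ω', ψ ω' * p (ω', θ), fun ω => ?_⟩
    rw [hφ.apply_eq_mul_induced hp θ₀ θ ω, hF _ (isDist_normalized (fun ω => hp.1 _) hpos),
      normalized_mul_normalized hpos.ne']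
    simp only [normalized, Pi.mul_apply]
    ring

lemma apply_eq_normalized_of_linearIndependent {θ₀ : Θ} {ψ : Ω → ℝ} (hψ : ∀ ω, 0 < ψ ω)
    (hF : ∀ q, IsDist q → induced φ θ₀ q = normalized (ψ * q)) {p : Ω × Θ → ℝ} (hp : IsDist p)
    (hli : LinearIndependent ℝ fun θ ω => p (ω, θ)) :
    φ p = normalized ((fun x => ψ x.1) * p) := by
  choose c hc using hφ.exists_apply_slice_eq_mul hF hp
  set Z := ∑ x : Ω × Θ, ψ x.1 * p x
  have hZ : ∑ ω, ψ ω * marginal p ω = Z := by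
    simp only [Z, marginal, Finset.mul_sum, Fintype.sum_prod_type]
  have hcZ : ∀ θ, c θ - Z⁻¹ = 0 := by
    refine Fintype.linearIndependent_iff.1 hli _ (funext fun ω => ?_)
    have h := congrFun (hφ.marginal_apply hp θ₀) ω
    rw [hF _ (isDist_marginal hp)] at h
    simp only [marginal, normalized, Pi.mul_apply, hc] at h hZ
    rw [hZ] at h
    have : ψ ω * ∑ θ, (c θ - Z⁻¹) * p (ω, θ) = 0 := by
      rw [← sub_eq_zero.2 h, div_eq_mul_inv, Finset.mul_sum, Finset.mul_sum, Finset.sum_mul,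
        ← Finset.sum_sub_distrib]
      exact Finset.sum_congr rfl fun θ _ => by ring
    simpa [Finset.sum_apply] using (mul_eq_zero.1 this).resolve_left (hψ ω).ne'
  funext ⟨ω, θ⟩
  rw [hc, sub_eq_zero.1 (hcZ θ)]
  simp only [normalized, Pi.mul_apply, div_eq_inv_mul]
  ring

end IsAdmissible

end LinearIndependent

lemma subset_closure_linearIndependent {Ω Θ : Type*} [Fintype Ω] [Fintype Θ] [DecidableEq Θ]
    (ι : Θ ↪ Ω) :
    {p : Ω × Θ → ℝ | IsDist p} ⊆
      closure {p | IsDist p ∧ LinearIndependent ℝ fun θ ω => p (ω, θ)} := by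
  classical
  intro p hp
  -- Push `p` towards the graph of `ι`: rows `ι` of the slice matrix become `P + t • 1`.
  set D : Ω × Θ → ℝ := fun x => if x.1 = ι x.2 then 1 else 0
  have hD : 0 ≤ D := fun x => by
    simp only [D]
    split_ifs <;> norm_num
  have hsum : ∀ t : ℝ, 0 ≤ t → 0 < ∑ x, (p + t • D) x := fun t ht => by
    simp only [Pi.add_apply, Pi.smul_apply, smul_eq_mul, Finset.sum_add_distrib, ← Finset.mul_sum,
      hp.2]
    exact add_pos_of_pos_of_nonneg one_pos (mul_nonneg ht (Finset.sum_nonneg fun x _ => hD x))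
  have hlim : Tendsto (fun t : ℝ => normalized (p + t • D)) (𝓝[>] 0) (𝓝 p) := by
    have h : Tendsto (fun t : ℝ => p + t • D) (𝓝 0) (𝓝 (p + (0 : ℝ) • D)) :=
      (continuous_const.add (continuous_id.smul continuous_const)).tendsto 0
    have h' := (continuousAt_normalized (hsum 0 le_rfl).ne').tendsto.comp h
    rw [zero_smul, add_zero, normalized_of_isDist hp] at h'
    exact h'.mono_left nhdsWithin_le_nhds
  set P : Matrix Θ Θ ℝ := Matrix.of fun θ θ' => p (ι θ', θ)
  refine mem_closure_of_tendsto hlim ?_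
  filter_upwards [self_mem_nhdsWithin, nhdsGT_le_nhdsNE 0 P.eventually_det_add_smul_one_ne_zero]
    with t (ht : 0 < t) hdet
  refine ⟨isDist_normalized (add_nonneg hp.1 (smul_nonneg ht.le hD)) (hsum t ht.le),
    LinearIndependent.of_det_comp_ne_zero ι ?_⟩
  have hM : (Matrix.of fun θ θ' => normalized (p + t • D) (ι θ', θ)) =
      (∑ x, (p + t • D) x)⁻¹ • (P + t • 1) := by
    ext θ θ'
    simp [normalized, D, P, Matrix.one_apply, ι.injective.eq_iff, eq_comm, div_eq_inv_mul]
  rw [hM, Matrix.det_smul]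
  exact mul_ne_zero (pow_ne_zero _ (inv_ne_zero (hsum t ht.le).ne')) hdet

/-- **Theorem (case `|Ω| ≥ |Θ|`)**: if `|Ω| ≥ 3`, `|Θ| ≥ 2`, `|Ω| ≥ |Θ|` and `φ`
satisfies positivity, continuity, weak signal coherence and marginality, then there is
`ψ : Ω → ℝ₊₊` with `φ(p)(ω,θ) = ψ(ω)p(ω,θ) / Σ_{ω',θ'} ψ(ω')p(ω',θ')`. -/
theorem stmt9 {Ω Θ : Type*} [Fintype Ω] [Fintype Θ] [DecidableEq Θ]
    (hΩ : 3 ≤ Fintype.card Ω) (hΘ : 2 ≤ Fintype.card Θ)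
    (hcard : Fintype.card Θ ≤ Fintype.card Ω)
    (φ : (Ω × Θ → ℝ) → Ω × Θ → ℝ)
    (hmap : ∀ p, IsDist p → IsDist (φ p))
    (hpos : PositiveJoint φ)
    (hcont : ContinuousOn φ {p | IsDist p})
    (hcoh : WeakSignalCoherent φ)
    (hmarg : Marginality φ) :
    ∃ ψ : Ω → ℝ, (∀ ω, 0 < ψ ω) ∧
      ∀ p, IsDist p → ∀ (ω : Ω) (θ : Θ),
        φ p (ω, θ) = ψ ω * p (ω, θ) / ∑ x : Ω × Θ, ψ x.1 * p x := by
  classical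
  have hφ : IsAdmissible φ := ⟨hmap, hpos, hcoh, hmarg⟩
  have : Nontrivial Θ := Fintype.one_lt_card_iff_nontrivial.1 hΘ
  obtain ⟨θ₀⟩ : Nonempty Θ := inferInstance
  obtain ⟨ι⟩ := Function.Embedding.nonempty_of_card_le hcard
  obtain ⟨ψ, hψ, hF⟩ := hφ.exists_induced_eq_normalized θ₀ hΩ
  have key : Set.EqOn φ (fun p => normalized ((fun x : Ω × Θ => ψ x.1) * p)) {p | IsDist p} :=
    Set.EqOn.of_subset_closure
      (fun p hp => hφ.apply_eq_normalized_of_linearIndependent hψ hF hp.1 hp.2) hcont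
      (continuousOn_normalized_mul fun x => hψ x.1) (fun p hp => hp.1)
      (subset_closure_linearIndependent ι)
  exact ⟨ψ, hψ, fun p hp ω θ => congrFun (key hp) (ω, θ)⟩
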